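/- Let m, m₅, k₂ ∈ ℝ, W > 0, α ∈ {1, −1}, set s := √(k₂² + m₅²), and define v := (−i·α·s, k₂ − i·m₅, i·α·s, −k₂ + i·m₅) ∈ ℂ⁴. Then: (i) (1 + i·Γ¹)·v = 0; (ii) (k₂·Γ⁰Γ² + i·m₅·Γ⁰Γ⁵)·v = (α·s)·v; (iii) the function φ(x) := e^{−m·x}·v solves the full Kekulé transverse eigenvalue equation −i·Γ⁰Γ¹·φ'(x) + k₂·Γ⁰Γ²·φ(x) + (m·Γ⁰ + i·m₅·Γ⁰Γ⁵)·φ(x) = (α·s)·φ(x) for all x ∈ ℝ, and satisfies (1 + i·Γ¹)·φ(x) = 0 for all x ∈ ℝ (in particular the armchair boundary conditions at x = 0 and x = W); (iv) if (k₂, m₅) ≠ (0, 0) then v ≠ 0. These are the gapped edge modes of the fully Kekulé-distorted metallic armchair nanoribbon, with edge-branch gap 2·|m₅|. -/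

import Mathlib

open Matrix Complex

noncomputable section

/-- The 2×2 identity (σ₀). -/
def σ0 : Matrix (Fin 2) (Fin 2) ℂ := 1
/-- Pauli matrix σ₁. -/
def σ1 : Matrix (Fin 2) (Fin 2) ℂ := !![0, 1; 1, 0]
/-- Pauli matrix σ₂. -/
def σ2 : Matrix (Fin 2) (Fin 2) ℂ := !![0, -Complex.I; Complex.I, 0]
/-- Pauli matrix σ₃. -/
def σ3 : Matrix (Fin 2) (Fin 2) ℂ := !![1, 0; 0, -1]

/-- Kronecker product of two 2×2 complex matrices, as a 4×4 matrix
(the first factor indexes the 2×2 blocks). -/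
def kron (A B : Matrix (Fin 2) (Fin 2) ℂ) : Matrix (Fin 4) (Fin 4) ℂ :=
  !![A 0 0 * B 0 0, A 0 0 * B 0 1, A 0 1 * B 0 0, A 0 1 * B 0 1;
     A 0 0 * B 1 0, A 0 0 * B 1 1, A 0 1 * B 1 0, A 0 1 * B 1 1;
     A 1 0 * B 0 0, A 1 0 * B 0 1, A 1 1 * B 0 0, A 1 1 * B 0 1;
     A 1 0 * B 1 0, A 1 0 * B 1 1, A 1 1 * B 1 0, A 1 1 * B 1 1]

/-- Γ⁰ = −(σ₂ ⊗ σ₁). -/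
def Γ0 : Matrix (Fin 4) (Fin 4) ℂ := -(kron σ2 σ1)
/-- Γ¹ = −i (σ₁ ⊗ σ₀). -/
def Γ1 : Matrix (Fin 4) (Fin 4) ℂ := -(Complex.I • kron σ1 σ0)
/-- Γ² = −i (σ₂ ⊗ σ₃). -/
def Γ2 : Matrix (Fin 4) (Fin 4) ℂ := -(Complex.I • kron σ2 σ3)
/-- Γ³ = −i (σ₂ ⊗ σ₂). -/
def Γ3 : Matrix (Fin 4) (Fin 4) ℂ := -(Complex.I • kron σ2 σ2)
/-- Γ⁵ = i Γ⁰Γ¹Γ²Γ³. -/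
def Γ5 : Matrix (Fin 4) (Fin 4) ℂ := Complex.I • (Γ0 * Γ1 * Γ2 * Γ3)

/-- The free graphene Hamiltonian in momentum space,
H₀(k₁,k₂) = −(k₁ (σ₃ ⊗ σ₁) + k₂ (σ₀ ⊗ σ₂)). -/
def H0 (k1 k2 : ℝ) : Matrix (Fin 4) (Fin 4) ℂ :=
  -((k1 : ℂ) • kron σ3 σ1 + (k2 : ℂ) • kron σ0 σ2)


set_option maxHeartbeats 1000000

lemma Γ1_eq : Γ1 = !![0,0,-Complex.I,0; 0,0,0,-Complex.I; -Complex.I,0,0,0; 0,-Complex.I,0,0] := by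
  ext i j
  fin_cases i <;> fin_cases j <;>
    simp [Γ1, kron, σ1, σ0, Matrix.one_apply, Matrix.vecHead, Matrix.vecTail]

lemma Γ0_eq : Γ0 = !![0,0,0,Complex.I; 0,0,Complex.I,0; 0,-Complex.I,0,0; -Complex.I,0,0,0] := by
  ext i j
  fin_cases i <;> fin_cases j <;> simp [Γ0, kron, σ2, σ1, Matrix.vecHead, Matrix.vecTail]

lemma Γ2_eq : Γ2 = !![0,0,-1,0; 0,0,0,1; 1,0,0,0; 0,-1,0,0] := by
  ext i j
  fin_cases i <;> fin_cases j <;> simp [Γ2, kron, σ2, σ3, Matrix.vecHead, Matrix.vecTail]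

lemma Γ3_eq : Γ3 = !![0,0,0,Complex.I; 0,0,-Complex.I,0; 0,-Complex.I,0,0; Complex.I,0,0,0] := by
  ext i j
  fin_cases i <;> fin_cases j <;>
    simp [Γ3, kron, σ2, Matrix.vecHead, Matrix.vecTail]

lemma G01_eq : Γ0 * Γ1 = !![0,1,0,0; 1,0,0,0; 0,0,0,-1; 0,0,-1,0] := by
  rw [Γ0_eq, Γ1_eq]
  ext i j
  fin_cases i <;> fin_cases j <;>
    simp [Matrix.mul_apply, Fin.sum_univ_four, Matrix.vecHead, Matrix.vecTail]

lemma G02_eq : Γ0 * Γ2 = !![0,-Complex.I,0,0; Complex.I,0,0,0; 0,0,0,-Complex.I; 0,0,Complex.I,0] := by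
  rw [Γ0_eq, Γ2_eq]
  ext i j
  fin_cases i <;> fin_cases j <;>
    simp [Matrix.mul_apply, Fin.sum_univ_four, Matrix.vecHead, Matrix.vecTail]

lemma Γ5_eq : Γ5 = !![-1,0,0,0; 0,-1,0,0; 0,0,1,0; 0,0,0,1] := by
  rw [Γ5, G01_eq, Γ2_eq, Γ3_eq]
  ext i j
  fin_cases i <;> fin_cases j <;>
    simp [Matrix.mul_apply, Fin.sum_univ_four, Matrix.vecHead, Matrix.vecTail]

lemma G05_eq : Γ0 * Γ5 = !![0,0,0,Complex.I; 0,0,Complex.I,0; 0,Complex.I,0,0; Complex.I,0,0,0] := by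
  rw [Γ0_eq, Γ5_eq]
  ext i j
  fin_cases i <;> fin_cases j <;>
    simp [Matrix.mul_apply, Fin.sum_univ_four, Matrix.vecHead, Matrix.vecTail]

/-- the gapped edge modes of the fully Kekulé-distorted metallic
armchair nanoribbon. With s = √(k₂² + m₅²) and
v = (−iαs, k₂ − i m₅, iαs, −k₂ + i m₅), one has (1 + iΓ¹)v = 0,
(k₂ Γ⁰Γ² + i m₅ Γ⁰Γ⁵)v = αs·v, the function φ(x) = e^{−mx} v solves the full
Kekulé transverse eigenvalue equation with energy Ω = αs and satisfies the
armchair boundary conditions everywhere, and v ≠ 0 unless k₂ = m₅ = 0. -/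
theorem gapped_edge_modes_kekule (m m5 k2 W α : ℝ) (hW : W > 0)
    (hα : α = 1 ∨ α = -1)
    (s : ℝ) (hs : s = Real.sqrt (k2 ^ 2 + m5 ^ 2))
    (v : Fin 4 → ℂ)
    (hv : v = ![-(Complex.I * (α : ℂ) * (s : ℂ)), (k2 : ℂ) - Complex.I * (m5 : ℂ),
                Complex.I * (α : ℂ) * (s : ℂ), -(k2 : ℂ) + Complex.I * (m5 : ℂ)])
    (φ : ℝ → Fin 4 → ℂ)
    (hφ : φ = fun x : ℝ => Complex.exp (-(m : ℂ) * (x : ℂ)) • v) :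
    ((1 : Matrix (Fin 4) (Fin 4) ℂ) + Complex.I • Γ1).mulVec v = 0 ∧
    ((k2 : ℂ) • (Γ0 * Γ2) + (Complex.I * (m5 : ℂ)) • (Γ0 * Γ5)).mulVec v
      = ((α : ℂ) * (s : ℂ)) • v ∧
    (∀ x : ℝ,
      (-Complex.I) • (Γ0 * Γ1).mulVec (deriv φ x)
        + (k2 : ℂ) • (Γ0 * Γ2).mulVec (φ x)
        + ((m : ℂ) • Γ0 + (Complex.I * (m5 : ℂ)) • (Γ0 * Γ5)).mulVec (φ x)
      = ((α : ℂ) * (s : ℂ)) • φ x) ∧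
    (∀ x : ℝ, ((1 : Matrix (Fin 4) (Fin 4) ℂ) + Complex.I • Γ1).mulVec (φ x) = 0) ∧
    (¬(k2 = 0 ∧ m5 = 0) → v ≠ 0) := by
  have hss : (s:ℂ) * s = (k2:ℂ)^2 + (m5:ℂ)^2 := by
    have h : s^2 = k2^2 + m5^2 := by
      rw [hs]; exact Real.sq_sqrt (by positivity)
    have h2 := congrArg (fun r : ℝ => (r : ℂ)) h
    push_cast at h2
    linear_combination h2
  have hα2 : (α:ℂ) * α = 1 := by rcases hα with h | h <;> simp [h]
  have ht : ((α:ℂ)*s) * ((α:ℂ)*s) = (k2:ℂ)^2 + (m5:ℂ)^2 := by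
    linear_combination (s:ℂ)*(s:ℂ)*hα2 + hss
  have hI : Complex.I ^ 2 = -1 := Complex.I_sq
  have hbc : ((1 : Matrix (Fin 4) (Fin 4) ℂ) + Complex.I • Γ1).mulVec v = 0 := by
    subst hv
    funext i
    fin_cases i <;>
      simp [Γ1_eq, Matrix.mulVec, dotProduct, Fin.sum_univ_four, Matrix.one_apply,
        Matrix.add_apply, Matrix.smul_apply, Matrix.vecHead, Matrix.vecTail, smul_eq_mul]
  have heig : ((k2 : ℂ) • (Γ0 * Γ2) + (Complex.I * (m5 : ℂ)) • (Γ0 * Γ5)).mulVec v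
      = ((α : ℂ) * (s : ℂ)) • v := by
    subst hv
    funext i
    fin_cases i <;>
      simp [G02_eq, G05_eq, Matrix.mulVec, dotProduct, Fin.sum_univ_four,
        Matrix.add_apply, Matrix.smul_apply, Matrix.vecHead, Matrix.vecTail, smul_eq_mul] <;>
      first
        | ring1
        | linear_combination Complex.I * (m5:ℂ)^2 * hI + Complex.I * ht
        | linear_combination (-(Complex.I * (m5:ℂ)^2)) * hI - Complex.I * ht
        | linear_combination (Complex.I*(α:ℂ)*(s:ℂ)*(m5:ℂ) - (k2:ℂ)*(α:ℂ)*(s:ℂ)) * hI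
        | linear_combination ((k2:ℂ)*(α:ℂ)*(s:ℂ) - Complex.I*(m5:ℂ)*(α:ℂ)*(s:ℂ)) * hI
  refine ⟨hbc, heig, ?_, ?_, ?_⟩
  · intro x
    have hd : HasDerivAt (fun x : ℝ => Complex.exp (-(m:ℂ) * (x:ℂ)))
        (-(m:ℂ) * Complex.exp (-(m:ℂ) * (x:ℂ))) x := by
      have h1 : HasDerivAt (fun x : ℝ => ((x:ℂ))) 1 x := by
        simpa using (hasDerivAt_id x).ofReal_comp
      have h2 : HasDerivAt (fun x : ℝ => -(m:ℂ) * (x:ℂ)) (-(m:ℂ)) x := by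
        simpa using h1.const_mul (-(m:ℂ))
      simpa [mul_comm] using h2.cexp
    have hdφ : deriv φ x = (-(m:ℂ) * Complex.exp (-(m:ℂ) * (x:ℂ))) • v := by
      rw [hφ]; exact (hd.smul_const v).deriv
    rw [hdφ, hφ]
    subst hv
    rw [G01_eq, G02_eq, G05_eq, Γ0_eq]
    funext i
    fin_cases i <;>
      simp [Matrix.mulVec, dotProduct, Fin.sum_univ_four, neg_mul,
        Matrix.add_apply, Matrix.smul_apply, Matrix.vecHead, Matrix.vecTail, smul_eq_mul] <;>
      first
        | ring1
        | linear_combination (Complex.exp (-((m:ℂ) * (x:ℂ))) * Complex.I * (m5:ℂ)^2) * hI + (Complex.exp (-((m:ℂ) * (x:ℂ))) * Complex.I) * ht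
        | linear_combination (-(Complex.exp (-((m:ℂ) * (x:ℂ))) * Complex.I * (m5:ℂ)^2)) * hI - (Complex.exp (-((m:ℂ) * (x:ℂ))) * Complex.I) * ht
        | linear_combination (Complex.exp (-((m:ℂ) * (x:ℂ))) * (Complex.I*(α:ℂ)*(s:ℂ)*(m5:ℂ) - (k2:ℂ)*(α:ℂ)*(s:ℂ))) * hI
        | linear_combination (Complex.exp (-((m:ℂ) * (x:ℂ))) * ((k2:ℂ)*(α:ℂ)*(s:ℂ) - Complex.I*(m5:ℂ)*(α:ℂ)*(s:ℂ))) * hI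
  · intro x
    rw [hφ]
    simp only [Matrix.mulVec_smul, hbc, smul_zero]
  · rintro hk hv0
    apply hk
    have h1 : (k2:ℂ) - Complex.I * (m5:ℂ) = 0 := by
      have := congrFun hv0 1
      simpa [hv] using this
    constructor
    · simpa using congrArg Complex.re h1
    · simpa using congrArg Complex.im h1
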